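/- If φ is an automorphism of a finite tree T whose fixed vertex set is exactly {v₀}, then every automorphism of T fixes v₀; i.e., Aut(T) equals the stabilizer Γ_{v₀} of v₀. -/

import Mathlib

/-!
Automorphisms preserve eccentricity, hence the center of the tree. The center is a vertex or
an edge: an inner vertex of the path between two central vertices would have smaller
eccentricity, since every vertex is closer to it than to one of the two ends.
An automorphism fixing `v₀` cannot swap two adjacent vertices, whose distances to `v₀` differ
in a tree; so `φ` fixes the center pointwise, the center is `{v₀}`, and every automorphism,
preserving the center, fixes `v₀`.
-/

namespace SimpleGraph

variable {V V' : Type*} {G : SimpleGraph V} {G' : SimpleGraph V'}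

theorem Hom.edist_map_le (f : G →g G') (u v : V) : G'.edist (f u) (f v) ≤ G.edist u v := by
  by_cases h : G.Reachable u v
  · obtain ⟨p, hp⟩ := h.exists_walk_length_eq_edist
    exact hp ▸ (p.length_map f).symm ▸ edist_le (p.map f)
  · exact edist_eq_top_of_not_reachable h ▸ le_top

theorem Iso.edist_map (f : G ≃g G') (u v : V) : G'.edist (f u) (f v) = G.edist u v := by
  refine le_antisymm (Hom.edist_map_le f.toHom u v) ?_
  simpa using Hom.edist_map_le f.symm.toHom (f u) (f v)

theorem Iso.dist_map (f : G ≃g G') (u v : V) : G'.dist (f u) (f v) = G.dist u v := by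
  simp only [dist, f.edist_map]

theorem Iso.eccent_map (f : G ≃g G') (u : V) : G'.eccent (f u) = G.eccent u := by
  rw [eccent, eccent, ← f.surjective.iSup_comp]
  simp only [f.edist_map]

theorem Iso.radius_eq (f : G ≃g G') : G'.radius = G.radius := by
  simp only [radius, ← f.eccent_map]
  exact (f.surjective.iInf_comp _).symm

theorem Iso.apply_mem_center_iff (f : G ≃g G') {u : V} : f u ∈ G'.center ↔ u ∈ G.center := by
  simp only [mem_center_iff, f.eccent_map, f.radius_eq]

theorem Walk.dist_add_dist_of_mem_support {u v w : V} {p : G.Walk u v}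
    (hp : p.length = G.dist u v) (hw : w ∈ p.support) :
    G.dist u w + G.dist w v = G.dist u v := by
  classical
  rw [← length_eq_dist_of_subwalk hp (p.isSubwalk_takeUntil hw),
    ← length_eq_dist_of_subwalk hp (p.isSubwalk_dropUntil hw), ← Walk.length_append,
    p.take_spec hw, hp]

theorem IsAcyclic.support_subset_support_of_isPath (hG : G.IsAcyclic) {u v : V}
    {p : G.Walk u v} (hp : p.IsPath) (q : G.Walk u v) : p.support ⊆ q.support := by
  classical
  have hpq : p = q.bypass :=
    congrArg Subtype.val <| (hG.subsingleton_path u v).elim ⟨p, hp⟩ ⟨_, q.bypass_isPath⟩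
  exact hpq ▸ q.support_bypass_subset_support

theorem IsTree.dist_lt_or_dist_lt_of_mem_support (hG : G.IsTree) {a b m : V}
    {p : G.Walk a b} (hp : p.IsPath) (hm : m ∈ p.support) (hma : m ≠ a) (hmb : m ≠ b) (u : V) :
    G.dist m u < G.dist a u ∨ G.dist m u < G.dist b u := by
  obtain ⟨q, hq⟩ := hG.connected.exists_walk_length_eq_dist a u
  obtain ⟨r, hr⟩ := hG.connected.exists_walk_length_eq_dist u b
  have hsupp := hG.isAcyclic.support_subset_support_of_isPath hp (q.append r) hm
  rcases (Walk.mem_support_append_iff q r).mp hsupp with hmq | hmr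
  · have := Walk.dist_add_dist_of_mem_support hq hmq
    have := hG.connected.pos_dist_of_ne hma.symm
    left; lia
  · have := Walk.dist_add_dist_of_mem_support hr hmr
    have := hG.connected.pos_dist_of_ne hmb
    right; rw [dist_comm, dist_comm (u := b)]; lia

theorem IsTree.adj_of_mem_center [Finite V] (hG : G.IsTree) {a b : V} (ha : a ∈ G.center)
    (hb : b ∈ G.center) (hab : a ≠ b) : G.Adj a b := by
  by_contra hnadj
  obtain ⟨p, hp, -⟩ := hG.connected.exists_path_of_dist a b
  have hnil : ¬p.Nil := Walk.not_nil_of_ne hab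
  have hsnd : G.Adj a p.snd := p.adj_snd hnil
  have hsnd_ne_b : p.snd ≠ b := fun h => hnadj (h ▸ hsnd)
  obtain ⟨u, hu⟩ := G.exists_edist_eq_eccent_of_finite p.snd
  have hle : ∀ x ∈ G.center, (G.dist x u : ℕ∞) ≤ G.radius := fun x hx => by
    rw [(hG.connected x u).coe_dist_eq_edist, ← (mem_center_iff x).mp hx]
    exact edist_le_eccent
  have hlt : G.eccent p.snd < G.radius := by
    rw [← hu, ← (hG.connected _ _).coe_dist_eq_edist]
    rcases hG.dist_lt_or_dist_lt_of_mem_support hp (p.getVert_mem_support 1) hsnd.ne'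
      hsnd_ne_b u with h | h
    · exact (Nat.cast_lt.mpr h).trans_le (hle a ha)
    · exact (Nat.cast_lt.mpr h).trans_le (hle b hb)
  exact hlt.not_ge radius_le_eccent

theorem IsTree.apply_eq_self_of_mem_center [Finite V] (hG : G.IsTree) (f : G ≃g G) {v c : V}
    (hv : f v = v) (hc : c ∈ G.center) : f c = c := by
  by_contra hne
  have hadj : G.Adj c (f c) :=
    hG.adj_of_mem_center hc (f.apply_mem_center_iff.mpr hc) (Ne.symm hne)
  have hdist : G.dist v (f c) = G.dist v c := by rw [← f.dist_map v c, hv]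
  exact hG.dist_ne_of_adj v hadj hdist.symm

end SimpleGraph

/-- If some automorphism of a finite tree has fixed vertex set exactly `{v₀}`,
then every automorphism fixes `v₀`: `Aut(T)` equals the stabilizer of `v₀`. -/
theorem tree_aut_all_fix_common_vertex
    {V : Type*} [Fintype V] (G : SimpleGraph V) (hT : G.IsTree)
    (φ : G ≃g G) (v₀ : V) (hfix : ∀ v : V, φ v = v ↔ v = v₀) :
    ∀ ψ : G ≃g G, ψ v₀ = v₀ := by
  have hφv₀ : φ v₀ = v₀ := (hfix v₀).mpr rfl
  have hcenter : ∀ c ∈ G.center, c = v₀ := fun c hc =>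
    (hfix c).mp (hT.apply_eq_self_of_mem_center φ hφv₀ hc)
  have : Nonempty V := hT.connected.nonempty
  obtain ⟨c, hc⟩ := G.center_nonempty
  have hv₀ : v₀ ∈ G.center := hcenter c hc ▸ hc
  exact fun ψ => hcenter (ψ v₀) (ψ.apply_mem_center_iff.mpr hv₀)
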